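/- arXiv:2306.15531 — 3 statements merged into one kernel-verified Lean document; each statement's English description precedes it below -/
import Mathlib

section
/- Let w ≥ 1, let H = (1/√2)·!![1,1;1,−1] be the Hadamard matrix, let X̄ = X^{⊗w}, Z̄ = Z^{⊗w}, and let C̃ = |0⟩⟨0| ⊗ I_{2^w} + |1⟩⟨1| ⊗ X̄ on ℂ² ⊗ (ℂ²)^{⊗w}. Then (H ⊗ H^{⊗w}) · C̃ · (H ⊗ H^{⊗w}) = (1/2)·( I₂ ⊗ (I_{2^w} + Z̄) + X ⊗ (I_{2^w} − Z̄) ). In particular, conjugating by transversal Hadamards exchanges the roles of control and target of the clean–noisy CNOT, the right-hand side being the gate that applies X to the first qubit controlled on the logical Z̄-eigenvalue of the remaining w qubits. -/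
open Matrix
open scoped Kronecker

/-- The Pauli `X` matrix. -/
noncomputable def PauliX : Matrix (Fin 2) (Fin 2) ℂ := !![0, 1; 1, 0]

/-- The Pauli `Z` matrix. -/
noncomputable def PauliZ : Matrix (Fin 2) (Fin 2) ℂ := !![1, 0; 0, -1]

/-- The Hadamard matrix `H = (1/√2)·!![1,1;1,−1]`. -/
noncomputable def Hmat : Matrix (Fin 2) (Fin 2) ℂ :=
  ((Real.sqrt 2 : ℂ))⁻¹ • !![1, 1; 1, -1]

/-- Conversion from `Bool` basis labels to `Fin 2`. -/
def b2f (b : Bool) : Fin 2 := if b then 1 else 0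

/-- The `w`-fold Kronecker power `X̄ = X^{⊗w}`, indexed by `Fin w → Bool`. -/
noncomputable def Xw (w : ℕ) : Matrix (Fin w → Bool) (Fin w → Bool) ℂ :=
  fun x y => ∏ k, PauliX (b2f (x k)) (b2f (y k))

/-- The `w`-fold Kronecker power `Z̄ = Z^{⊗w}`, indexed by `Fin w → Bool`. -/
noncomputable def Zw (w : ℕ) : Matrix (Fin w → Bool) (Fin w → Bool) ℂ :=
  fun x y => ∏ k, PauliZ (b2f (x k)) (b2f (y k))

/-- The `w`-fold Kronecker power `H^{⊗w}` of the Hadamard, indexed by `Fin w → Bool`. -/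
noncomputable def Hw (w : ℕ) : Matrix (Fin w → Bool) (Fin w → Bool) ℂ :=
  fun x y => ∏ k, Hmat (b2f (x k)) (b2f (y k))

/-- The clean–noisy gate `C̃ = |0⟩⟨0| ⊗ I_{2^w} + |1⟩⟨1| ⊗ X̄` on `ℂ² ⊗ (ℂ²)^{⊗w}`. -/
noncomputable def Ctilde (w : ℕ) :
    Matrix (Fin 2 × (Fin w → Bool)) (Fin 2 × (Fin w → Bool)) ℂ :=
  Matrix.single 0 0 1 ⊗ₖ (1 : Matrix (Fin w → Bool) (Fin w → Bool) ℂ)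
    + Matrix.single 1 1 1 ⊗ₖ Xw w


namespace Matrix

theorem add_kronecker_add_sub_kronecker {l m n p R : Type*} [CommRing R]
    (A B : Matrix l m R) (C D : Matrix n p R) :
    (A + B) ⊗ₖ C + (A - B) ⊗ₖ D = A ⊗ₖ (C + D) + B ⊗ₖ (C - D) := by
  ext ⟨i, k⟩ ⟨j, k'⟩
  simp only [kroneckerMap_apply, add_apply, sub_apply]
  ring

variable (ι : Type*) {m n p R : Type*} [Fintype ι] [CommSemiring R]

/-- The `ι`-fold Kronecker power of `A`, with basis states indexed by `ι → m`. -/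
def piKronecker (A : Matrix m n R) : Matrix (ι → m) (ι → n) R :=
  of fun x y => ∏ k, A (x k) (y k)

theorem piKronecker_mul [DecidableEq ι] [Fintype n] (A : Matrix m n R) (B : Matrix n p R) :
    piKronecker ι A * piKronecker ι B = piKronecker ι (A * B) := by
  ext x y
  simp only [piKronecker, mul_apply, of_apply, Finset.prod_univ_sum,
    Fintype.piFinset_univ, Finset.prod_mul_distrib]

theorem piKronecker_one [DecidableEq ι] [DecidableEq n] :
    piKronecker ι (1 : Matrix n n R) = 1 := by
  ext x y
  simp only [piKronecker, of_apply, one_apply, Finset.prod_boole, Finset.mem_univ, true_implies,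
    funext_iff]

end Matrix

open Matrix

theorem b2f_bijective : Function.Bijective b2f := by decide

noncomputable def boolEquivFinTwo : Bool ≃ Fin 2 := Equiv.ofBijective b2f b2f_bijective

theorem Hmat_mul_mul_Hmat (A : Matrix (Fin 2) (Fin 2) ℂ) :
    Hmat * A * Hmat = (2 : ℂ)⁻¹ • (!![1, 1; 1, -1] * A * !![1, 1; 1, -1]) := by
  have hsqrt : ((Real.sqrt 2 : ℂ))⁻¹ * ((Real.sqrt 2 : ℂ))⁻¹ = 2⁻¹ := by
    rw [← mul_inv, ← Complex.ofReal_mul, Real.mul_self_sqrt zero_le_two, Complex.ofReal_ofNat]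
  rw [Hmat, Matrix.smul_mul, Matrix.smul_mul, Matrix.mul_smul, smul_smul, hsqrt]

theorem Hmat_mul_Hmat : Hmat * Hmat = 1 := by
  have h := Hmat_mul_mul_Hmat 1
  rw [mul_one] at h
  rw [h]
  ext i j
  fin_cases i <;> fin_cases j <;> norm_num [mul_fin_two, one_fin_two]

theorem Hmat_mul_PauliX_mul_Hmat : Hmat * PauliX * Hmat = PauliZ := by
  rw [Hmat_mul_mul_Hmat]
  ext i j
  fin_cases i <;> fin_cases j <;> norm_num [PauliX, PauliZ, mul_fin_two]

theorem Hmat_mul_single_zero_mul_Hmat :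
    Hmat * single 0 0 1 * Hmat = (2 : ℂ)⁻¹ • (1 + PauliX) := by
  rw [Hmat_mul_mul_Hmat]
  congr 1
  ext i j
  fin_cases i <;> fin_cases j <;>
    simp [PauliX, mul_apply, Fin.sum_univ_two, vecMul, dotProduct, single_apply]

theorem Hmat_mul_single_one_mul_Hmat :
    Hmat * single 1 1 1 * Hmat = (2 : ℂ)⁻¹ • (1 - PauliX) := by
  rw [Hmat_mul_mul_Hmat]
  congr 1
  ext i j
  fin_cases i <;> fin_cases j <;>
    simp [PauliX, mul_apply, Fin.sum_univ_two, vecMul, dotProduct, single_apply]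

section TensorPowers

variable (w : ℕ)

theorem Hw_eq_piKronecker :
    Hw w = piKronecker (Fin w) (Hmat.submatrix boolEquivFinTwo boolEquivFinTwo) := rfl

theorem Xw_eq_piKronecker :
    Xw w = piKronecker (Fin w) (PauliX.submatrix boolEquivFinTwo boolEquivFinTwo) := rfl

theorem Zw_eq_piKronecker :
    Zw w = piKronecker (Fin w) (PauliZ.submatrix boolEquivFinTwo boolEquivFinTwo) := rfl

theorem Hw_mul_Hw : Hw w * Hw w = 1 := by
  rw [Hw_eq_piKronecker, piKronecker_mul, submatrix_mul_equiv, Hmat_mul_Hmat,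
    submatrix_one_equiv, piKronecker_one]

theorem Hw_mul_Xw_mul_Hw : Hw w * Xw w * Hw w = Zw w := by
  rw [Hw_eq_piKronecker, Xw_eq_piKronecker, Zw_eq_piKronecker,
    piKronecker_mul, submatrix_mul_equiv, piKronecker_mul, submatrix_mul_equiv,
    Hmat_mul_PauliX_mul_Hmat]

end TensorPowers

theorem hadamard_reverses_ctilde_general (w : ℕ) :
    (Hmat ⊗ₖ Hw w) * Ctilde w * (Hmat ⊗ₖ Hw w) =
      (2 : ℂ)⁻¹ • ((1 : Matrix (Fin 2) (Fin 2) ℂ) ⊗ₖ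
            ((1 : Matrix (Fin w → Bool) (Fin w → Bool) ℂ) + Zw w)
          + PauliX ⊗ₖ ((1 : Matrix (Fin w → Bool) (Fin w → Bool) ℂ) - Zw w)) := by
  rw [Ctilde, mul_add, add_mul, ← mul_kronecker_mul, ← mul_kronecker_mul, ← mul_kronecker_mul,
    ← mul_kronecker_mul, mul_one, Hw_mul_Hw, Hw_mul_Xw_mul_Hw, Hmat_mul_single_zero_mul_Hmat,
    Hmat_mul_single_one_mul_Hmat, smul_kronecker, smul_kronecker, ← smul_add,
    add_kronecker_add_sub_kronecker]

/-- Control–target reversal identity (Eq. (11) of the paper): conjugating the clean–noisy CNOT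
by transversal Hadamards gives
`(1/2)·(I₂ ⊗ (I + Z̄) + X ⊗ (I − Z̄))`, the gate applying `X` on the first qubit controlled on
the logical `Z̄`-eigenvalue of the remaining `w` qubits. -/
theorem hadamard_reverses_ctilde (w : ℕ) (hw : 1 ≤ w) :
    (Hmat ⊗ₖ Hw w) * Ctilde w * (Hmat ⊗ₖ Hw w) =
      (2 : ℂ)⁻¹ • ((1 : Matrix (Fin 2) (Fin 2) ℂ) ⊗ₖ
            ((1 : Matrix (Fin w → Bool) (Fin w → Bool) ℂ) + Zw w)
          + PauliX ⊗ₖ ((1 : Matrix (Fin w → Bool) (Fin w → Bool) ℂ) - Zw w)) :=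
  hadamard_reverses_ctilde_general w
end

section
/- Let n ≥ 1 and let p : ({0,1}^n) → ℝ be a probability distribution (nonnegative, summing to 1) on bit strings of length n, encoded as p : (Fin n → Bool) → ℝ. For each i ∈ Fin n let m_i = ∑_{x : x_i = 0} p(x) be the marginal probability of outcome 0 on bit i. Then (1/2)·∑_{x ∈ {0,1}^n} |p(x) − 2^{−n}| ≥ (1/n)·∑_{i=1}^{n} (m_i − 1/2)². -/
/-!
The uniform distribution puts mass exactly `1/2` on `{x | x i = 0}`, so `mᵢ - 1/2` is the sum of
`p - 2⁻ⁿ` over that half of the cube. Since `p - 2⁻ⁿ` sums to zero over the whole cube, its sum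
over any subset is at most half its `ℓ¹` norm, i.e. `|mᵢ - 1/2| ≤ δ(p)`. As `mᵢ ∈ [0, 1]`,
`(mᵢ - 1/2)² ≤ |mᵢ - 1/2| ≤ δ(p)`, and averaging over `i` gives the bound.
-/

open Finset

theorem two_mul_abs_sum_le_sum_abs_of_sum_eq_zero {ι K : Type*} [Fintype ι] [Field K]
    [LinearOrder K] [IsStrictOrderedRing K] {f : ι → K} (hf : ∑ x, f x = 0) (s : Finset ι) :
    2 * |∑ x ∈ s, f x| ≤ ∑ x, |f x| := by
  classical
  have hcompl : ∑ x ∈ sᶜ, f x = -∑ x ∈ s, f x := by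
    rw [← sum_add_sum_compl s f] at hf
    linarith
  calc 2 * |∑ x ∈ s, f x| = |∑ x ∈ s, f x| + |∑ x ∈ sᶜ, f x| := by
        rw [hcompl, abs_neg, two_mul]
    _ ≤ ∑ x ∈ s, |f x| + ∑ x ∈ sᶜ, |f x| :=
        add_le_add (abs_sum_le_sum_abs _ _) (abs_sum_le_sum_abs _ _)
    _ = ∑ x, |f x| := sum_add_sum_compl s _

theorem card_filter_apply_eq_mul_two {ι : Type*} [Fintype ι] [DecidableEq ι] (i : ι) (b : Bool) :
    #{x : ι → Bool | x i = b} * 2 = 2 ^ Fintype.card ι := by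
  have hcard : 0 < Fintype.card ι := Fintype.card_pos_iff.2 ⟨i⟩
  have hfilter := Fintype.card_filter_piFinset_const_eq_of_mem (univ : Finset Bool) i (mem_univ b)
  rw [Fintype.piFinset_univ, card_univ, Fintype.card_bool] at hfilter
  rw [hfilter, ← pow_succ, Nat.sub_add_cancel hcard]

theorem sum_filter_apply_eq_inv_two_pow {ι : Type*} [Fintype ι] [DecidableEq ι] (i : ι)
    (b : Bool) : ∑ x : ι → Bool with x i = b, ((2 : ℝ) ^ Fintype.card ι)⁻¹ = 1 / 2 := by
  have hcard : (#{x : ι → Bool | x i = b} : ℝ) * 2 = 2 ^ Fintype.card ι := by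
    exact_mod_cast card_filter_apply_eq_mul_two i b
  rw [sum_const, nsmul_eq_mul, eq_div_iff two_ne_zero, mul_right_comm, hcard]
  exact mul_inv_cancel₀ (pow_ne_zero _ two_ne_zero)

theorem abs_sum_filter_sub_half_le {ι : Type*} [Fintype ι] [DecidableEq ι]
    {p : (ι → Bool) → ℝ} (hsum : ∑ x, p x = 1) (i : ι) (b : Bool) :
    |∑ x with x i = b, p x - 1 / 2| ≤ (1 / 2) * ∑ x, |p x - ((2 : ℝ) ^ Fintype.card ι)⁻¹| := by
  set u : ℝ := ((2 : ℝ) ^ Fintype.card ι)⁻¹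
  have hzero : ∑ x, (p x - u) = 0 := by
    rw [sum_sub_distrib, hsum, sum_const, card_univ, Fintype.card_fun, Fintype.card_bool,
      nsmul_eq_mul]
    push_cast
    rw [mul_inv_cancel₀ (pow_ne_zero _ two_ne_zero), sub_self]
  have hshift : ∑ x with x i = b, p x - 1 / 2 = ∑ x with x i = b, (p x - u) := by
    rw [sum_sub_distrib, sum_filter_apply_eq_inv_two_pow]
  have hhalf := two_mul_abs_sum_le_sum_abs_of_sum_eq_zero hzero {x | x i = b}
  rw [hshift]
  linarith

theorem one_div_mul_sum_le_of_forall_le {n : ℕ} {f : Fin n → ℝ} {c : ℝ} (hc : 0 ≤ c)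
    (hf : ∀ i, f i ≤ c) : (1 / n) * ∑ i, f i ≤ c := by
  have hsum : ∑ i, f i ≤ n * c := by
    simpa using sum_le_sum fun i (_ : i ∈ univ) => hf i
  rcases Nat.eq_zero_or_pos n with rfl | hn
  · simpa using hc
  · rw [one_div_mul_eq_div, div_le_iff₀ (by exact_mod_cast hn)]
    linarith

theorem averaged_marginal_bound_general (n : ℕ) (p : (Fin n → Bool) → ℝ)
    (hpos : ∀ x, 0 ≤ p x) (hsum : ∑ x, p x = 1)
    (m : Fin n → ℝ)
    (hm : ∀ i, m i = ∑ x ∈ Finset.univ.filter (fun x : Fin n → Bool => x i = false), p x) :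
    (1 / 2) * ∑ x, |p x - ((2 : ℝ) ^ n)⁻¹| ≥ (1 / n) * ∑ i, (m i - 1 / 2) ^ 2 := by
  refine one_div_mul_sum_le_of_forall_le (by positivity) fun i => ?_
  have hm0 : 0 ≤ m i := hm i ▸ sum_nonneg fun x _ => hpos x
  have hm1 : m i ≤ 1 := hm i ▸ hsum ▸ sum_le_univ_sum_of_nonneg hpos
  have hbias : |m i - 1 / 2| ≤ (1 / 2) * ∑ x, |p x - ((2 : ℝ) ^ n)⁻¹| := by
    simpa [hm i] using abs_sum_filter_sub_half_le hsum i false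
  calc (m i - 1 / 2) ^ 2 = |m i - 1 / 2| ^ 2 := (sq_abs _).symm
    _ ≤ |m i - 1 / 2| := sq_le (abs_nonneg _) (abs_le.2 ⟨by linarith, by linarith⟩)
    _ ≤ _ := hbias

/-- Averaged marginal bound (Eq. (A17) of the paper): for a probability distribution `p` on
`{0,1}ⁿ` with marginals `m i` of outcome `0` on each bit `i`, the total variation distance from
uniform satisfies `(1/2)·∑ₓ |p(x) − 2⁻ⁿ| ≥ (1/n)·∑ᵢ (mᵢ − 1/2)²`. -/
theorem averaged_marginal_bound (n : ℕ) (hn : 1 ≤ n) (p : (Fin n → Bool) → ℝ)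
    (hpos : ∀ x, 0 ≤ p x) (hsum : ∑ x, p x = 1)
    (m : Fin n → ℝ)
    (hm : ∀ i, m i = ∑ x ∈ Finset.univ.filter (fun x : Fin n → Bool => x i = false), p x) :
    (1 / 2) * ∑ x, |p x - ((2 : ℝ) ^ n)⁻¹| ≥ (1 / n) * ∑ i, (m i - 1 / 2) ^ 2 :=
  averaged_marginal_bound_general n p hpos hsum m hm
end

section
/- Let 0 ≤ ε_c < ε_d < ε_b < 1 be real numbers, let n > 0, n_c, n_d, n_b ≥ 0 be real numbers with n_c + n_d = n, set f_c = n_c/n, f_d = n_d/n − n_b/(2n), f_b = n_b/(2n), and let L > 0 be real. Then (1−ε_c)^{2L f_c}·(1−ε_d)^{2L f_d}·(1−ε_b)^{2L f_b} ≥ (1−ε_d)^{2L} if and only if n_c ≥ (n_b/2) · (log(1−ε_d) − log(1−ε_b)) / (log(1−ε_c) − log(1−ε_d)). (Real powers are Mathlib's Real.rpow; log is the natural logarithm.) -/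
/-- Threshold condition (Eq. (19) of the paper): the partially error-corrected damping factor
`(1−ε_c)^{2Lf_c}·(1−ε_d)^{2Lf_d}·(1−ε_b)^{2Lf_b}` dominates the fully noisy factor
`(1−ε_d)^{2L}` iff the number of clean qubits passes the stated threshold.
Powers are real powers (`Real.rpow`), `Real.log` is the natural logarithm. -/
theorem clean_qubit_threshold (εc εd εb n nc nd nb L : ℝ)
    (h0 : 0 ≤ εc) (hcd : εc < εd) (hdb : εd < εb) (hb1 : εb < 1)
    (hn : 0 < n) (hnc : 0 ≤ nc) (hnd : 0 ≤ nd) (hnb : 0 ≤ nb)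
    (hsum : nc + nd = n) (hL : 0 < L) :
    (1 - εc) ^ (2 * L * (nc / n)) * (1 - εd) ^ (2 * L * (nd / n - nb / (2 * n))) *
        (1 - εb) ^ (2 * L * (nb / (2 * n))) ≥ (1 - εd) ^ (2 * L) ↔
      nc ≥ nb / 2 * ((Real.log (1 - εd) - Real.log (1 - εb)) /
        (Real.log (1 - εc) - Real.log (1 - εd))) := by
  have hx : (0:ℝ) < 1 - εc := by linarith
  have hy : (0:ℝ) < 1 - εd := by linarith
  have hz : (0:ℝ) < 1 - εb := by linarith
  set a := Real.log (1 - εc) with ha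
  set d := Real.log (1 - εd) with hd
  set b := Real.log (1 - εb) with hbdef
  have had : d < a := Real.log_lt_log hy (by linarith)
  have hdb' : b < d := Real.log_lt_log hz (by linarith)
  have hadpos : 0 < a - d := by linarith
  rw [Real.rpow_def_of_pos hx, Real.rpow_def_of_pos hy, Real.rpow_def_of_pos hy,
    Real.rpow_def_of_pos hz, ← Real.exp_add, ← Real.exp_add, ge_iff_le, Real.exp_le_exp]
  have hne : n ≠ 0 := ne_of_gt hn
  have hnd' : nd = n - nc := by linarith
  have hkey : a * (2 * L * (nc / n)) + d * (2 * L * (nd / n - nb / (2 * n))) +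
      b * (2 * L * (nb / (2 * n))) - d * (2 * L)
      = (2 * L / n) * (nc * (a - d) - nb / 2 * (d - b)) := by
    rw [hnd']; field_simp; ring
  constructor
  · intro h
    have h2 : 0 ≤ (2 * L / n) * (nc * (a - d) - nb / 2 * (d - b)) := by
      rw [← hkey]; linarith
    have hpos : 0 < 2 * L / n := by positivity
    have h3 : 0 ≤ nc * (a - d) - nb / 2 * (d - b) := nonneg_of_mul_nonneg_right h2 hpos
    rw [ge_iff_le, mul_div_assoc', div_le_iff₀ hadpos]
    linarith
  · intro h
    rw [ge_iff_le, mul_div_assoc', div_le_iff₀ hadpos] at h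
    have hpos : 0 ≤ 2 * L / n := by positivity
    nlinarith [mul_nonneg hpos (by linarith : (0:ℝ) ≤ nc * (a - d) - nb / 2 * (d - b))]
end
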